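/- arXiv:2601.20197 — 4 statements merged into one kernel-verified Lean document; each statement's English description precedes it below -/
import Mathlib

section
/- Let f and g be nonnegative measurable real-valued functions of a random variable X, with E[f(X)], E[f(X)^2], E[g(X)], E[g(X)^2] finite and E[g(X)] > 0. Then P[f(X) ≥ g(X)] ≤ (E[f(X)] + (1/2)·sqrt(Var[g(X)])) / E[g(X)]. -/
open MeasureTheory

lemma cs_integral {Ω : Type*} [MeasurableSpace Ω] (μ : Measure Ω)
    {h k : Ω → ℝ} (hh : MemLp h 2 μ) (hk : MemLp k 2 μ) :
    ∫ ω, h ω * k ω ∂μ ≤ Real.sqrt (∫ ω, (h ω)^2 ∂μ) * Real.sqrt (∫ ω, (k ω)^2 ∂μ) := by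
  set H : Lp ℝ 2 μ := hh.toLp h with hH
  set K : Lp ℝ 2 μ := hk.toLp k with hK
  have hHc : (H : Ω → ℝ) =ᵐ[μ] h := hh.coeFn_toLp
  have hKc : (K : Ω → ℝ) =ᵐ[μ] k := hk.coeFn_toLp
  have hinner : (inner ℝ H K : ℝ) = ∫ ω, h ω * k ω ∂μ := by
    rw [MeasureTheory.L2.inner_def]
    refine integral_congr_ae ?_
    filter_upwards [hHc, hKc] with ω h1 h2
    simp [h1, h2, mul_comm]
  have hnH : ‖H‖ = Real.sqrt (∫ ω, (h ω)^2 ∂μ) := by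
    have : ‖H‖^2 = ∫ ω, (h ω)^2 ∂μ := by
      rw [← real_inner_self_eq_norm_sq, MeasureTheory.L2.inner_def]
      refine integral_congr_ae ?_
      filter_upwards [hHc] with ω h1
      simp [h1, sq]
    rw [← this, Real.sqrt_sq (norm_nonneg _)]
  have hnK : ‖K‖ = Real.sqrt (∫ ω, (k ω)^2 ∂μ) := by
    have : ‖K‖^2 = ∫ ω, (k ω)^2 ∂μ := by
      rw [← real_inner_self_eq_norm_sq, MeasureTheory.L2.inner_def]
      refine integral_congr_ae ?_
      filter_upwards [hKc] with ω h1
      simp [h1, sq]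
    rw [← this, Real.sqrt_sq (norm_nonneg _)]
  calc ∫ ω, h ω * k ω ∂μ = (inner ℝ H K : ℝ) := hinner.symm
    _ ≤ ‖H‖ * ‖K‖ := real_inner_le_norm H K
    _ = _ := by rw [hnH, hnK]


/-- Generalized Markov inequality: for nonnegative measurable `f, g` of a random
variable `X` with finite first and second moments and `E[g(X)] > 0`,
`P[f(X) ≥ g(X)] ≤ (E[f(X)] + (1/2)·√(Var[g(X)])) / E[g(X)]`. -/
theorem generalized_markov
    {Ω : Type*} [MeasurableSpace Ω] (μ : Measure Ω) [IsProbabilityMeasure μ]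
    {p : ℕ} (X : Ω → (Fin p → ℝ)) (hX : Measurable X)
    (f g : (Fin p → ℝ) → ℝ) (hf : Measurable f) (hg : Measurable g)
    (hf0 : ∀ x, 0 ≤ f x) (hg0 : ∀ x, 0 ≤ g x)
    (hfi : Integrable (fun ω => f (X ω)) μ)
    (hfi2 : Integrable (fun ω => (f (X ω))^2) μ)
    (hgi : Integrable (fun ω => g (X ω)) μ)
    (hgi2 : Integrable (fun ω => (g (X ω))^2) μ)
    (hEg : 0 < ∫ ω, g (X ω) ∂μ) :
    (μ {ω | g (X ω) ≤ f (X ω)}).toReal ≤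
      ((∫ ω, f (X ω) ∂μ) +
        (1/2) * Real.sqrt ((∫ ω, (g (X ω))^2 ∂μ) - (∫ ω, g (X ω) ∂μ)^2)) /
        (∫ ω, g (X ω) ∂μ) := by
  set m : ℝ := ∫ ω, g (X ω) ∂μ with hm
  set A : Set Ω := {ω | g (X ω) ≤ f (X ω)} with hAdef
  have hA : MeasurableSet A := measurableSet_le (hg.comp hX) (hf.comp hX)
  set P : ℝ := (μ A).toReal with hP
  have hP0 : 0 ≤ P := ENNReal.toReal_nonneg
  have hP1 : P ≤ 1 := by
    rw [hP]
    exact ENNReal.toReal_le_of_le_ofReal zero_le_one (by simpa using prob_le_one)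
  set ind : Ω → ℝ := A.indicator (fun _ => (1:ℝ)) with hind
  have hindint : Integrable ind μ := (integrable_const (1:ℝ)).indicator hA
  have hindP : ∫ ω, ind ω ∂μ = P := by
    rw [hind, integral_indicator_const (1:ℝ) hA]; simp [hP, Measure.real]
  -- MemLp facts
  have hgm2 : MemLp (fun ω => g (X ω)) 2 μ :=
    (memLp_two_iff_integrable_sq ((hg.comp hX).aestronglyMeasurable)).mpr hgi2
  have hh2 : MemLp (fun ω => g (X ω) - m) 2 μ := hgm2.sub (memLp_const m)
  have hk2 : MemLp (fun ω => ind ω - P) 2 μ :=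
    ((memLp_const (1:ℝ)).indicator hA).sub (memLp_const P)
  -- E2 : ∫ h² = ∫ g² − m²
  have E2 : ∫ ω, (g (X ω) - m)^2 ∂μ = (∫ ω, (g (X ω))^2 ∂μ) - m^2 := by
    have hpt : ∀ ω, (g (X ω) - m)^2 = (g (X ω))^2 - (2*m) * g (X ω) + m^2 := by
      intro ω; ring
    simp_rw [hpt]
    have i1 : Integrable (fun ω => (g (X ω))^2 - (2*m) * g (X ω)) μ :=
      hgi2.sub (hgi.const_mul _)
    rw [integral_add i1 (integrable_const _),
      integral_sub hgi2 (hgi.const_mul _), integral_const_mul, integral_const]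
    simp [← hm]; ring
  -- E3 : ∫ k² = P − P²
  have E3 : ∫ ω, (ind ω - P)^2 ∂μ = P - P^2 := by
    have hpt : ∀ ω, (ind ω - P)^2 = (1 - 2*P) * ind ω + P^2 := by
      intro ω
      by_cases hω : ω ∈ A
      · simp [hind, Set.indicator_of_mem hω]; ring
      · simp [hind, Set.indicator_of_notMem hω]
    simp_rw [hpt]
    rw [integral_add (hindint.const_mul _) (integrable_const _),
      integral_const_mul, hindP, integral_const]
    simp; ring
  -- E1 : ∫ h k = ∫ indicator g − m P
  have hindg : Integrable (A.indicator (fun ω => g (X ω))) μ := hgi.indicator hA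
  have E1 : ∫ ω, (g (X ω) - m) * (ind ω - P) ∂μ
      = (∫ ω, A.indicator (fun ω => g (X ω)) ω ∂μ) - m * P := by
    have hpt : ∀ ω, (g (X ω) - m) * (ind ω - P)
        = A.indicator (fun ω => g (X ω)) ω - P * g (X ω) - m * ind ω + m * P := by
      intro ω
      by_cases hω : ω ∈ A
      · simp [hind, Set.indicator_of_mem hω]; ring
      · simp [hind, Set.indicator_of_notMem hω]; ring
    simp_rw [hpt]
    have i1 : Integrable (fun ω => A.indicator (fun ω => g (X ω)) ω - P * g (X ω)) μ :=
      hindg.sub (hgi.const_mul _)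
    have i2 : Integrable (fun ω => (A.indicator (fun ω => g (X ω)) ω - P * g (X ω)) - m * ind ω) μ :=
      i1.sub (hindint.const_mul _)
    rw [integral_add i2 (integrable_const _),
      integral_sub i1 (hindint.const_mul _),
      integral_sub hindg (hgi.const_mul _), integral_const_mul, integral_const_mul,
      hindP, integral_const]
    simp [← hm]; ring
  -- indicator g ≤ f
  have hgf : ∫ ω, A.indicator (fun ω => g (X ω)) ω ∂μ ≤ ∫ ω, f (X ω) ∂μ := by
    refine integral_mono hindg hfi ?_
    intro ω
    by_cases hω : ω ∈ A
    · rw [Set.indicator_of_mem hω]; exact hω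
    · simp [Set.indicator_of_notMem hω, hf0]
  -- Cauchy–Schwarz on (−h, k)
  have hcs : ∫ ω, (-(g (X ω) - m)) * (ind ω - P) ∂μ
      ≤ Real.sqrt (∫ ω, (-(g (X ω) - m))^2 ∂μ) * Real.sqrt (∫ ω, (ind ω - P)^2 ∂μ) :=
    cs_integral μ hh2.neg hk2
  have hneg : ∫ ω, (-(g (X ω) - m)) * (ind ω - P) ∂μ
      = -∫ ω, (g (X ω) - m) * (ind ω - P) ∂μ := by
    rw [← integral_neg]; congr 1; ext ω; ring
  have hsq : ∫ ω, (-(g (X ω) - m))^2 ∂μ = ∫ ω, (g (X ω) - m)^2 ∂μ := by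
    congr 1; ext ω; ring
  rw [hneg, hsq, E2, E3] at hcs
  -- √(P − P²) ≤ 1/2
  have hPP : Real.sqrt (P - P^2) ≤ 1/2 := by
    have h14 : P - P^2 ≤ (1/2)^2 := by nlinarith [sq_nonneg (P - 1/2)]
    calc Real.sqrt (P - P^2) ≤ Real.sqrt ((1/2)^2) := Real.sqrt_le_sqrt h14
      _ = 1/2 := by rw [Real.sqrt_sq]; norm_num
  have hvar0 : 0 ≤ Real.sqrt ((∫ ω, (g (X ω))^2 ∂μ) - m^2) := Real.sqrt_nonneg _
  -- combine: m * P ≤ ∫ f + √Var * (1/2)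
  have key : m * P ≤ (∫ ω, f (X ω) ∂μ) +
      (1/2) * Real.sqrt ((∫ ω, (g (X ω))^2 ∂μ) - m^2) := by
    have h1 : m * P = (∫ ω, A.indicator (fun ω => g (X ω)) ω ∂μ)
        - ∫ ω, (g (X ω) - m) * (ind ω - P) ∂μ := by rw [E1]; ring
    have h2 : -(∫ ω, (g (X ω) - m) * (ind ω - P) ∂μ)
        ≤ Real.sqrt ((∫ ω, (g (X ω))^2 ∂μ) - m^2) * (1/2) := by
      calc -(∫ ω, (g (X ω) - m) * (ind ω - P) ∂μ)
          ≤ Real.sqrt ((∫ ω, (g (X ω))^2 ∂μ) - m^2) * Real.sqrt (P - P^2) := hcs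
        _ ≤ Real.sqrt ((∫ ω, (g (X ω))^2 ∂μ) - m^2) * (1/2) := by
            exact mul_le_mul_of_nonneg_left hPP hvar0
    rw [h1]; linarith [hgf]
  rw [le_div_iff₀ hEg]
  linarith [key, mul_comm P m]
end

section
/- Fix real constants a > 0 and 0 < K ≤ 1, and let b > 0. Consider G = a·p^b as a function of p. Then lim_{p→∞} [1 − (1 − K/p)^{a·p^b − 1}] equals 0 if 0 < b < 1, equals 1 − exp(−Ka) if b = 1, and equals 1 if b > 1. -/
open Filter

theorem aux_classifier (a K b : ℝ) (ha : 0 < a) (hK0 : 0 < K) (hK1 : K ≤ 1)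
    (L : ℝ)
    (hE : Tendsto (fun p : ℕ => (a * (p : ℝ) ^ b - 1) / p) atTop (nhds L)) :
    Tendsto (fun p : ℕ => 1 - (1 - K / (p : ℝ)) ^ (a * (p : ℝ) ^ b - 1))
      atTop (nhds (1 - Real.exp (L * (-K)))) := by
  have hcast : Tendsto (fun p : ℕ => (p : ℝ)) atTop atTop := tendsto_natCast_atTop_atTop
  have hlog : Tendsto (fun p : ℕ => (p : ℝ) * Real.log (1 - K / p)) atTop (nhds (-K)) := by
    have h2 := (Real.tendsto_mul_log_one_add_div_atTop (-K)).comp hcast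
    refine h2.congr (fun p => ?_)
    simp [sub_eq_add_neg, neg_div, Function.comp]
  have hexp : Tendsto (fun p : ℕ => (a * (p : ℝ) ^ b - 1) * Real.log (1 - K / p))
      atTop (nhds (L * (-K))) := by
    have hprod := hE.mul hlog
    refine Tendsto.congr' ?_ hprod
    filter_upwards [eventually_ge_atTop 1] with p hp
    have hp0 : (p : ℝ) ≠ 0 := Nat.cast_ne_zero.mpr (by omega)
    field_simp
  have hev : ∀ᶠ p : ℕ in atTop,
      1 - Real.exp ((a * (p : ℝ) ^ b - 1) * Real.log (1 - K / p))
        = 1 - (1 - K / (p : ℝ)) ^ (a * (p : ℝ) ^ b - 1) := by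
    filter_upwards [eventually_ge_atTop 2] with p hp
    have hp2 : (2 : ℝ) ≤ p := by exact_mod_cast hp
    have hpos : 0 < 1 - K / (p : ℝ) := by
      have : K / (p : ℝ) < 1 := by
        rw [div_lt_one (by linarith)]
        linarith
      linarith
    rw [Real.rpow_def_of_pos hpos, mul_comm]
  exact Tendsto.congr' hev ((Real.continuous_exp.tendsto _).comp hexp |>.const_sub 1)

/-- With `G = a·p^b` groups, the misclassification bound `1 − (1 − K/p)^{a p^b − 1}`
tends to 0 if `0 < b < 1`, to `1 − exp(−K a)` if `b = 1`, and to 1 if `b > 1`. -/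
theorem classifier_consistency_limit
    (a K b : ℝ) (ha : 0 < a) (hK0 : 0 < K) (hK1 : K ≤ 1) (hb : 0 < b) :
    (b < 1 →
      Tendsto (fun p : ℕ => 1 - (1 - K / (p : ℝ)) ^ (a * (p : ℝ) ^ b - 1))
        atTop (nhds 0)) ∧
    (b = 1 →
      Tendsto (fun p : ℕ => 1 - (1 - K / (p : ℝ)) ^ (a * (p : ℝ) ^ b - 1))
        atTop (nhds (1 - Real.exp (-(K * a))))) ∧
    (1 < b →
      Tendsto (fun p : ℕ => 1 - (1 - K / (p : ℝ)) ^ (a * (p : ℝ) ^ b - 1))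
        atTop (nhds 1)) := by
  have hcast : Tendsto (fun p : ℕ => (p : ℝ)) atTop atTop := tendsto_natCast_atTop_atTop
  have hinv : Tendsto (fun p : ℕ => 1 / (p : ℝ)) atTop (nhds 0) := by
    simpa [Pi.inv_def] using hcast.inv_tendsto_atTop
  have hratio : ∀ᶠ p : ℕ in atTop,
      (a * (p : ℝ) ^ b - 1) / p = a * (p : ℝ) ^ (b - 1) - 1 / p := by
    filter_upwards [eventually_ge_atTop 1] with p hp
    have hp0 : (0 : ℝ) < p := by exact_mod_cast Nat.lt_of_lt_of_le Nat.zero_lt_one hp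
    rw [Real.rpow_sub hp0, Real.rpow_one]
    field_simp
  refine ⟨?_, ?_, ?_⟩
  · intro hb1
    have hE : Tendsto (fun p : ℕ => (a * (p : ℝ) ^ b - 1) / p) atTop (nhds 0) := by
      refine Tendsto.congr' (hratio.mono fun p h => h.symm) ?_
      have h1 : Tendsto (fun p : ℕ => a * (p : ℝ) ^ (b - 1)) atTop (nhds (a * 0)) := by
        exact ((tendsto_rpow_neg_atTop (by linarith : 0 < 1 - b)).comp hcast).const_mul a
          |>.congr (fun p => by simp [Function.comp, neg_sub])
      simpa using h1.sub hinv
    have := aux_classifier a K b ha hK0 hK1 0 hE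
    simpa using this
  · intro hb1
    subst hb1
    have hE : Tendsto (fun p : ℕ => (a * (p : ℝ) ^ (1:ℝ) - 1) / p) atTop (nhds a) := by
      refine Tendsto.congr' (hratio.mono fun p h => h.symm) ?_
      have h1 : Tendsto (fun p : ℕ => a * (p : ℝ) ^ ((1:ℝ) - 1)) atTop (nhds a) := by
        have he : (fun p : ℕ => a * (p : ℝ) ^ ((1:ℝ) - 1)) = fun _ => a := by
          funext p; simp
        rw [he]; exact tendsto_const_nhds
      simpa using h1.sub hinv
    have := aux_classifier a K (1:ℝ) ha hK0 hK1 a hE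
    simpa [mul_comm] using this
  · intro hb1
    -- here exponent → -∞
    have hlog : Tendsto (fun p : ℕ => (p : ℝ) * Real.log (1 - K / p)) atTop (nhds (-K)) := by
      have h2 := (Real.tendsto_mul_log_one_add_div_atTop (-K)).comp hcast
      refine h2.congr (fun p => ?_)
      simp [sub_eq_add_neg, neg_div, Function.comp]
    have hE : Tendsto (fun p : ℕ => (a * (p : ℝ) ^ b - 1) / p) atTop atTop := by
      refine Tendsto.congr' (hratio.mono fun p h => h.symm) ?_
      have h1 : Tendsto (fun p : ℕ => a * (p : ℝ) ^ (b - 1)) atTop atTop := by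
        exact ((tendsto_rpow_atTop (by linarith : 0 < b - 1)).comp hcast).const_mul_atTop ha
      have := h1.atTop_add (hinv.neg)
      refine this.congr fun p => ?_
      ring
    have hexp : Tendsto (fun p : ℕ => (a * (p : ℝ) ^ b - 1) * Real.log (1 - K / p))
        atTop atBot := by
      have hprod := hE.atTop_mul_neg (by linarith : -K < 0) hlog
      refine Tendsto.congr' ?_ hprod
      filter_upwards [eventually_ge_atTop 1] with p hp
      have hp0 : (p : ℝ) ≠ 0 := Nat.cast_ne_zero.mpr (by omega)
      field_simp
    have hexp2 := Real.tendsto_exp_atBot.comp hexp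
    have hev : ∀ᶠ p : ℕ in atTop,
        1 - Real.exp ((a * (p : ℝ) ^ b - 1) * Real.log (1 - K / p))
          = 1 - (1 - K / (p : ℝ)) ^ (a * (p : ℝ) ^ b - 1) := by
      filter_upwards [eventually_ge_atTop 2] with p hp
      have hp2 : (2 : ℝ) ≤ p := by exact_mod_cast hp
      have hpos : 0 < 1 - K / (p : ℝ) := by
        have : K / (p : ℝ) < 1 := by
          rw [div_lt_one (by linarith)]
          linarith
        linarith
      rw [Real.rpow_def_of_pos hpos, mul_comm]
    have := hexp2.const_sub 1
    simpa using Tendsto.congr' hev this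
end

section
/- Let Y be a p-dimensional random vector with mean μ_g, covariance Σ_g with diagonal entries σ²_{g,ll}, and finite fourth moments E[Y_l⁴] < ∞ for each coordinate, and let μ_j ∈ ℝ^p be a constant vector with μ_j ≠ μ_g. Suppose there exists M with 0 < M < ∞ such that Var[‖Y − μ_j‖²] ≤ p²·M. Then P[‖Y − μ_g‖² ≥ ‖Y − μ_j‖²] ≤ (1 + p√M/(2·tr(Σ_g))) / (1 + ‖μ_g − μ_j‖²/tr(Σ_g)). -/
open MeasureTheory

/-- L¹ norm is bounded by L² norm on a probability space. -/
lemma l1_le_sqrt_l2 {Ω : Type*} [MeasurableSpace Ω] (μ : Measure Ω) [IsProbabilityMeasure μ]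
    (X : Ω → ℝ) (hX : Integrable X μ) (hX2 : Integrable (fun ω => X ω ^ 2) μ) :
    ∫ ω, |X ω| ∂μ ≤ Real.sqrt (∫ ω, X ω ^ 2 ∂μ) := by
  set m := ∫ ω, |X ω| ∂μ with hm
  have hm0 : 0 ≤ m := integral_nonneg fun ω => abs_nonneg _
  have hexp : ∫ ω, (|X ω| - m) ^ 2 ∂μ = (∫ ω, X ω ^ 2 ∂μ) - m ^ 2 := by
    have h1 : ∀ ω, (|X ω| - m) ^ 2 = X ω ^ 2 - (2 * m) * |X ω| + m ^ 2 := by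
      intro ω; rw [sub_sq]; rw [sq_abs]; ring
    calc ∫ ω, (|X ω| - m) ^ 2 ∂μ
        = ∫ ω, (X ω ^ 2 - (2 * m) * |X ω| + m ^ 2) ∂μ := by
          exact integral_congr_ae (Filter.Eventually.of_forall h1)
      _ = (∫ ω, (X ω ^ 2 - (2 * m) * |X ω|) ∂μ) + ∫ _, m ^ 2 ∂μ := by
          exact integral_add (hX2.sub (hX.abs.const_mul _)) (integrable_const _)
      _ = (∫ ω, X ω ^ 2 ∂μ) - (2 * m) * ∫ ω, |X ω| ∂μ + m ^ 2 := by
          rw [integral_sub hX2 (hX.abs.const_mul _), integral_const_mul, integral_const]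
          simp
      _ = (∫ ω, X ω ^ 2 ∂μ) - m ^ 2 := by rw [← hm]; ring
  have hnn : 0 ≤ ∫ ω, (|X ω| - m) ^ 2 ∂μ := integral_nonneg fun ω => sq_nonneg _
  have hle : m ^ 2 ≤ ∫ ω, X ω ^ 2 ∂μ := by linarith [hexp ▸ hnn]
  exact (Real.le_sqrt hm0 (le_trans (sq_nonneg m) hle)).mpr hle

/-- Per-pair misclassification bound for the Euclidean distance classifier:
`P[‖Y − μg‖² ≥ ‖Y − μj‖²] ≤ (1 + p√M/(2 tr(S))) / (1 + ‖μg − μj‖²/tr(S))`. -/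
theorem euclidean_classifier_bound
    {Ω : Type*} [MeasurableSpace Ω] (μ : Measure Ω) [IsProbabilityMeasure μ]
    {p : ℕ} (Y : Ω → (Fin p → ℝ)) (hY : Measurable Y)
    (μg μj : Fin p → ℝ) (S : Matrix (Fin p) (Fin p) ℝ)
    (hmean : ∀ l, ∫ ω, Y ω l ∂μ = μg l)
    (hcov : ∀ l k, ∫ ω, (Y ω l - μg l) * (Y ω k - μg k) ∂μ = S l k)
    (h4 : ∀ l, Integrable (fun ω => (Y ω l) ^ 4) μ)
    (hne : μj ≠ μg)
    (htr : 0 < ∑ l, S l l)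
    (M : ℝ) (hM0 : 0 < M)
    (hvar : (∫ ω, (∑ l, (Y ω l - μj l) ^ 2) ^ 2 ∂μ) -
        (∫ ω, ∑ l, (Y ω l - μj l) ^ 2 ∂μ) ^ 2 ≤ (p : ℝ) ^ 2 * M) :
    (μ {ω | ∑ l, (Y ω l - μj l) ^ 2 ≤ ∑ l, (Y ω l - μg l) ^ 2}).toReal ≤
      (1 + (p : ℝ) * Real.sqrt M / (2 * ∑ l, S l l)) /
        (1 + (∑ l, (μg l - μj l) ^ 2) / (∑ l, S l l)) := by
  -- notation
  set T : ℝ := ∑ l, S l l with hT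
  set D : ℝ := ∑ l, (μg l - μj l) ^ 2 with hD
  set f : Ω → ℝ := fun ω => ∑ l, (Y ω l - μg l) ^ 2 with hf
  set g : Ω → ℝ := fun ω => ∑ l, (Y ω l - μj l) ^ 2 with hg
  have hYl : ∀ l, Measurable fun ω => Y ω l := fun l => (measurable_pi_apply l).comp hY
  have hD0 : 0 ≤ D := Finset.sum_nonneg fun l _ => sq_nonneg _
  -- integrability building blocks
  have hint4 : ∀ (c : ℝ) (l : Fin p), Integrable (fun ω => (Y ω l - c) ^ 4) μ := by
    intro c l
    refine Integrable.mono' (((h4 l).add (integrable_const (c ^ 4))).const_mul 8)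
      (((hYl l).sub measurable_const).pow_const 4).aestronglyMeasurable
      (Filter.Eventually.of_forall fun ω => ?_)
    rw [Real.norm_eq_abs, abs_of_nonneg (by positivity)]
    try simp only [Pi.add_apply]
    nlinarith [sq_nonneg (Y ω l + c), sq_nonneg (Y ω l - c), sq_nonneg (Y ω l ^ 2 - c ^ 2),
      sq_nonneg (Y ω l * c), sq_nonneg ((Y ω l - c) ^ 2), sq_nonneg (Y ω l ^ 2 + c ^ 2)]
  have hint2 : ∀ (c : ℝ) (l : Fin p), Integrable (fun ω => (Y ω l - c) ^ 2) μ := by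
    intro c l
    refine Integrable.mono' ((hint4 c l).add (integrable_const 1))
      (((hYl l).sub measurable_const).pow_const 2).aestronglyMeasurable
      (Filter.Eventually.of_forall fun ω => ?_)
    rw [Real.norm_eq_abs, abs_of_nonneg (by positivity)]
    try simp only [Pi.add_apply]
    nlinarith [sq_nonneg ((Y ω l - c) ^ 2 - 1)]
  have hintY : ∀ l, Integrable (fun ω => Y ω l) μ := by
    intro l
    refine Integrable.mono' ((hint2 0 l).add (integrable_const 1))
      (hYl l).aestronglyMeasurable (Filter.Eventually.of_forall fun ω => ?_)
    rw [Real.norm_eq_abs]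
    try simp only [Pi.add_apply]
    have h0 : (Y ω l - 0) ^ 2 = Y ω l ^ 2 := by ring
    rw [h0]
    nlinarith [sq_nonneg (|Y ω l| - 1), abs_nonneg (Y ω l), sq_abs (Y ω l)]
  have hfint : Integrable f μ := integrable_finset_sum _ fun l _ => hint2 (μg l) l
  have hgint : Integrable g μ := integrable_finset_sum _ fun l _ => hint2 (μj l) l
  have hg2int : Integrable (fun ω => g ω ^ 2) μ := by
    refine Integrable.mono'
      ((integrable_finset_sum (μ := μ) Finset.univ fun l _ => hint4 (μj l) l).const_mul p)
      (hgint.aestronglyMeasurable.pow 2) (Filter.Eventually.of_forall fun ω => ?_)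
    rw [Real.norm_eq_abs, abs_of_nonneg (by positivity)]
    try simp only [Pi.add_apply]
    have := sq_sum_le_card_mul_sum_sq (s := Finset.univ) (f := fun l => (Y ω l - μj l) ^ 2)
    simpa [← pow_mul] using this
  have hfmeas : Measurable f := Finset.measurable_sum _ fun l _ =>
    ((hYl l).sub measurable_const).pow_const 2
  have hgmeas : Measurable g := Finset.measurable_sum _ fun l _ =>
    ((hYl l).sub measurable_const).pow_const 2
  -- mean computations
  have hEf : ∫ ω, f ω ∂μ = T := by
    rw [hf, integral_finset_sum _ fun l _ => hint2 (μg l) l]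
    refine Finset.sum_congr rfl fun l _ => ?_
    rw [← hcov l l]
    exact integral_congr_ae (Filter.Eventually.of_forall fun ω => pow_two _)
  have hEg : ∫ ω, g ω ∂μ = T + D := by
    rw [hg, integral_finset_sum _ fun l _ => hint2 (μj l) l, hT, hD, ← Finset.sum_add_distrib]
    refine Finset.sum_congr rfl fun l _ => ?_
    have key : ∫ ω, (Y ω l - μj l) ^ 2 ∂μ
        = (∫ ω, (Y ω l - μg l) * (Y ω l - μg l) ∂μ)
          + ((2 * (μg l - μj l)) * ∫ ω, Y ω l ∂μ)
          + ((μj l) ^ 2 - (μg l) ^ 2) := by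
      have hint2' : Integrable (fun ω => (Y ω l - μg l) * (Y ω l - μg l)) μ := by
        have := hint2 (μg l) l
        simpa [sq] using this
      calc ∫ ω, (Y ω l - μj l) ^ 2 ∂μ
          = ∫ ω, ((Y ω l - μg l) * (Y ω l - μg l) + (2 * (μg l - μj l)) * Y ω l
              + ((μj l) ^ 2 - (μg l) ^ 2)) ∂μ := by
            refine integral_congr_ae (Filter.Eventually.of_forall fun ω => ?_)
            ring
        _ = _ := by
            have I2 : Integrable (fun ω => (2 * (μg l - μj l)) * Y ω l) μ :=
              (hintY l).const_mul _
            have I1 : Integrable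
                (fun ω => (Y ω l - μg l) * (Y ω l - μg l) + (2 * (μg l - μj l)) * Y ω l) μ :=
              hint2'.add I2
            rw [integral_add I1 (integrable_const _), integral_add hint2' I2,
              integral_const_mul, integral_const]
            simp
    rw [key, hcov l l, hmean l]; ring
  -- variance bound
  have hVar : ∫ ω, (g ω - (T + D)) ^ 2 ∂μ ≤ (p : ℝ) ^ 2 * M := by
    have hexp : ∫ ω, (g ω - (T + D)) ^ 2 ∂μ
        = (∫ ω, g ω ^ 2 ∂μ) - (∫ ω, g ω ∂μ) ^ 2 := by
      calc ∫ ω, (g ω - (T + D)) ^ 2 ∂μ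
          = ∫ ω, (g ω ^ 2 - (2 * (T + D)) * g ω + (T + D) ^ 2) ∂μ := by
            refine integral_congr_ae (Filter.Eventually.of_forall fun ω => ?_); ring
        _ = (∫ ω, g ω ^ 2 ∂μ) - (2 * (T + D)) * (∫ ω, g ω ∂μ) + (T + D) ^ 2 := by
            have I2 : Integrable (fun ω => (2 * (T + D)) * g ω) μ := hgint.const_mul _
            have I1 : Integrable (fun ω => g ω ^ 2 - (2 * (T + D)) * g ω) μ := hg2int.sub I2
            rw [integral_add I1 (integrable_const _), integral_sub hg2int I2,
              integral_const_mul, integral_const]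
            simp
        _ = _ := by rw [hEg]; ring
    rw [hexp]
    exact hvar
  have hVnn : 0 ≤ ∫ ω, (g ω - (T + D)) ^ 2 ∂μ := integral_nonneg fun ω => sq_nonneg _
  have hsqrtVar : Real.sqrt (∫ ω, (g ω - (T + D)) ^ 2 ∂μ) ≤ (p : ℝ) * Real.sqrt M := by
    calc Real.sqrt (∫ ω, (g ω - (T + D)) ^ 2 ∂μ) ≤ Real.sqrt ((p : ℝ) ^ 2 * M) :=
          Real.sqrt_le_sqrt hVar
      _ = (p : ℝ) * Real.sqrt M := by
          rw [Real.sqrt_mul (by positivity), Real.sqrt_sq (by positivity)]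
  -- the event and its indicator
  set A : Set Ω := {ω | g ω ≤ f ω} with hA
  have hAmeas : MeasurableSet A := measurableSet_le hgmeas hfmeas
  set i : Ω → ℝ := A.indicator (fun _ => (1 : ℝ)) with hi
  set P : ℝ := (μ A).toReal with hP
  have hi01 : ∀ ω, 0 ≤ i ω ∧ i ω ≤ 1 := by
    intro ω
    constructor <;> · rw [hi]; by_cases h : ω ∈ A <;>
      simp [Set.indicator_of_mem, Set.indicator_of_notMem, h]
  have hiInt : Integrable i μ := by
    refine Integrable.mono' (integrable_const 1)
      ((measurable_const.indicator hAmeas).aestronglyMeasurable)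
      (Filter.Eventually.of_forall fun ω => ?_)
    rw [Real.norm_eq_abs, abs_of_nonneg (hi01 ω).1]; exact (hi01 ω).2
  have hiP : ∫ ω, i ω ∂μ = P := by
    rw [hi, integral_indicator_const (1 : ℝ) hAmeas]; simp [hP, measureReal_def]
  -- key pointwise bound: g * i ≤ f
  have hgi_le : ∀ ω, g ω * i ω ≤ f ω := by
    intro ω
    by_cases h : ω ∈ A
    · rw [hi, Set.indicator_of_mem h, mul_one]; exact h
    · rw [hi, Set.indicator_of_notMem h, mul_zero]
      exact Finset.sum_nonneg fun l _ => sq_nonneg _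
  have hgiInt : Integrable (fun ω => g ω * i ω) μ := by
    refine Integrable.mono' hgint.abs
      (hgmeas.mul (measurable_const.indicator hAmeas)).aestronglyMeasurable
      (Filter.Eventually.of_forall fun ω => ?_)
    rw [Real.norm_eq_abs, abs_mul]
    calc |g ω| * |i ω| ≤ |g ω| * 1 := by
          refine mul_le_mul_of_nonneg_left ?_ (abs_nonneg _)
          rw [abs_of_nonneg (hi01 ω).1]; exact (hi01 ω).2
      _ = |g ω| := mul_one _
  -- the core chain: (T + D) * P ≤ T + (1/2) * p * √M
  have hXint : Integrable (fun ω => (T + D) - g ω) μ := (integrable_const _).sub hgint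
  have hX2int : Integrable (fun ω => ((T + D) - g ω) ^ 2) μ := by
    have I : Integrable (fun ω => (T + D) ^ 2 - ((2 * (T + D)) * g ω - g ω ^ 2)) μ :=
      (integrable_const _).sub ((hgint.const_mul _).sub hg2int)
    exact I.congr (Filter.Eventually.of_forall fun ω => by ring)
  have hXmean : ∫ ω, ((T + D) - g ω) ∂μ = 0 := by
    rw [integral_sub (integrable_const _) hgint, integral_const, hEg]; simp
  have habs_le : ∫ ω, |(T + D) - g ω| ∂μ ≤ Real.sqrt (∫ ω, (g ω - (T + D)) ^ 2 ∂μ) := by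
    have := l1_le_sqrt_l2 μ (fun ω => (T + D) - g ω) hXint hX2int
    have heq : ∫ ω, ((T + D) - g ω) ^ 2 ∂μ = ∫ ω, (g ω - (T + D)) ^ 2 ∂μ := by
      refine integral_congr_ae (Filter.Eventually.of_forall fun ω => ?_); ring
    rwa [heq] at this
  have hXiInt : Integrable (fun ω => ((T + D) - g ω) * i ω) μ := by
    refine Integrable.mono' hXint.abs
      ((measurable_const.sub hgmeas).mul (measurable_const.indicator hAmeas)).aestronglyMeasurable
      (Filter.Eventually.of_forall fun ω => ?_)
    rw [Real.norm_eq_abs, abs_mul]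
    calc _ ≤ |(T + D) - g ω| * 1 := by
          refine mul_le_mul_of_nonneg_left ?_ (abs_nonneg _)
          rw [abs_of_nonneg (hi01 ω).1]; exact (hi01 ω).2
      _ = _ := mul_one _
  have hstep1 : ∫ ω, ((T + D) - g ω) * i ω ∂μ ≤ (1 / 2) * ∫ ω, |(T + D) - g ω| ∂μ := by
    have hsplit : ∫ ω, ((T + D) - g ω) * i ω ∂μ
        = ∫ ω, ((T + D) - g ω) * (i ω - 1 / 2) ∂μ := by
      have : ∀ ω, ((T + D) - g ω) * (i ω - 1 / 2)
          = ((T + D) - g ω) * i ω - (1 / 2) * ((T + D) - g ω) := fun ω => by ring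
      rw [integral_congr_ae (Filter.Eventually.of_forall this),
        integral_sub hXiInt (hXint.const_mul _), integral_const_mul, hXmean]
      ring
    rw [hsplit, ← integral_const_mul]
    refine integral_mono ?_ (hXint.abs.const_mul _) fun ω => ?_
    · refine Integrable.mono' (hXint.abs.const_mul (1 / 2))
        ((measurable_const.sub hgmeas).mul
          ((measurable_const.indicator hAmeas).sub measurable_const)).aestronglyMeasurable
        (Filter.Eventually.of_forall fun ω => ?_)
      rw [Real.norm_eq_abs, abs_mul]
      have h2 : |i ω - 1 / 2| ≤ 1 / 2 := by
        rw [abs_le]; constructor <;> [linarith [(hi01 ω).1]; linarith [(hi01 ω).2]]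
      calc |(T + D) - g ω| * |i ω - 1 / 2| ≤ |(T + D) - g ω| * (1 / 2) :=
            mul_le_mul_of_nonneg_left h2 (abs_nonneg _)
        _ = 1 / 2 * |(T + D) - g ω| := by ring
    · have h2 : |i ω - 1 / 2| ≤ 1 / 2 := by
        rw [abs_le]; constructor <;> [linarith [(hi01 ω).1]; linarith [(hi01 ω).2]]
      calc ((T + D) - g ω) * (i ω - 1 / 2) ≤ |((T + D) - g ω) * (i ω - 1 / 2)| := le_abs_self _
        _ = |(T + D) - g ω| * |i ω - 1 / 2| := abs_mul _ _
        _ ≤ |(T + D) - g ω| * (1 / 2) := mul_le_mul_of_nonneg_left h2 (abs_nonneg _)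
        _ = 1 / 2 * |(T + D) - g ω| := by ring
  have hchain : (T + D) * P ≤ T + (1 / 2) * ((p : ℝ) * Real.sqrt M) := by
    have e1 : (T + D) * P = ∫ ω, (T + D) * i ω ∂μ := by
      rw [integral_const_mul, hiP]
    have e2 : ∫ ω, (T + D) * i ω ∂μ
        = (∫ ω, ((T + D) - g ω) * i ω ∂μ) + ∫ ω, g ω * i ω ∂μ := by
      rw [← integral_add hXiInt hgiInt]
      refine integral_congr_ae (Filter.Eventually.of_forall fun ω => ?_); ring
    have e3 : ∫ ω, g ω * i ω ∂μ ≤ T := by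
      rw [← hEf]; exact integral_mono hgiInt hfint hgi_le
    have e4 : ∫ ω, ((T + D) - g ω) * i ω ∂μ ≤ (1 / 2) * ((p : ℝ) * Real.sqrt M) :=
      le_trans hstep1 (by gcongr; exact le_trans habs_le hsqrtVar)
    rw [e1, e2]; linarith
  -- final arithmetic
  have hTD : 0 < T + D := by linarith
  have hRHS : (1 + (p : ℝ) * Real.sqrt M / (2 * T)) / (1 + D / T)
      = (T + (1 / 2) * ((p : ℝ) * Real.sqrt M)) / (T + D) := by
    have hT0 : T ≠ 0 := htr.ne'
    have hTD0 : T + D ≠ 0 := hTD.ne'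
    field_simp
  rw [hRHS, le_div_iff₀ hTD]
  linarith [hchain]
end

section
/- Let Y be a p-dimensional random vector with mean μ and positive-definite covariance Σ_0, and let Σ_j be another positive-definite matrix with Σ_j ≠ Σ_0. If 2·tr(V) < tr(VᵀV), where V = W_0^{-1}(W_0 − W_j) for lower-triangular Cholesky factors W_0, W_j of Σ_0^{-1} and Σ_j^{-1}, then E[(Y − μ)ᵀ Σ_j^{-1}(Y − μ)] > E[(Y − μ)ᵀ Σ_0^{-1}(Y − μ)] = p. -/
/-!
Both expectations are traces: `E[(Y - m)ᵀ A (Y - m)] = tr(A Σ₀)`, so the true covariance gives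
`tr(Σ₀⁻¹ Σ₀) = p`. With `U = W₀⁻¹ Wⱼ = 1 - V`, cyclicity of the trace turns `tr(Σⱼ⁻¹ Σ₀)` into
`tr(U Uᵀ) = p - 2 tr V + tr(Vᵀ V)`, which exceeds `p` exactly when `2 tr V < tr(Vᵀ V)`.
-/

open MeasureTheory Matrix

section QuadraticForm

variable {Ω ι : Type*} [MeasurableSpace Ω] {μ : Measure Ω} [Fintype ι]

theorem integral_dotProduct_mulVec_eq_trace (Z : Ω → ι → ℝ) (A S : Matrix ι ι ℝ)
    (hint : ∀ l k, Integrable (fun ω => Z ω l * Z ω k) μ)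
    (hmom : ∀ l k, ∫ ω, Z ω l * Z ω k ∂μ = S l k) :
    ∫ ω, Z ω ⬝ᵥ (A *ᵥ Z ω) ∂μ = trace (A * Sᵀ) := by
  have hexpand : ∀ ω, Z ω ⬝ᵥ (A *ᵥ Z ω) = ∑ l, ∑ k, A l k * (Z ω l * Z ω k) := fun ω => by
    simp only [dotProduct, mulVec, Finset.mul_sum]
    exact Finset.sum_congr rfl fun l _ => Finset.sum_congr rfl fun k _ => by ring
  simp only [hexpand]
  rw [integral_finsetSum _ fun l _ =>
    integrable_finsetSum _ fun k _ => (hint l k).const_mul (A l k)]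
  simp only [trace, diag_apply, mul_apply, transpose_apply]
  refine Finset.sum_congr rfl fun l _ => ?_
  rw [integral_finsetSum _ fun k _ => (hint l k).const_mul (A l k)]
  exact Finset.sum_congr rfl fun k _ => by rw [integral_const_mul, hmom]

end QuadraticForm

section Trace

variable {n R : Type*} [Fintype n] [DecidableEq n] [CommRing R]

theorem trace_one_sub_mul_transpose_one_sub (V : Matrix n n R) :
    trace ((1 - V) * (1 - V)ᵀ) = Fintype.card n - 2 * trace V + trace (Vᵀ * V) := by
  have hexpand : (1 - V) * (1 - V)ᵀ = 1 - Vᵀ - V + V * Vᵀ := by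
    rw [transpose_sub, transpose_one]
    noncomm_ring
  rw [hexpand, trace_add, trace_sub, trace_sub, trace_one, trace_transpose, trace_mul_comm V]
  ring

theorem trace_mul_transpose_mul_inv_mul_transpose (W W' : Matrix n n R) :
    trace (W' * W'ᵀ * (W * Wᵀ)⁻¹) = trace (W⁻¹ * W' * (W⁻¹ * W')ᵀ) := by
  rw [Matrix.mul_inv_rev, transpose_mul, transpose_nonsing_inv, ← Matrix.mul_assoc,
    trace_mul_comm]
  simp only [Matrix.mul_assoc]

theorem trace_mul_transpose_mul_inv_mul_transpose_eq (W W' : Matrix n n R) (hW : IsUnit W.det) :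
    trace (W' * W'ᵀ * (W * Wᵀ)⁻¹) = Fintype.card n - 2 * trace (W⁻¹ * (W - W'))
      + trace ((W⁻¹ * (W - W'))ᵀ * (W⁻¹ * (W - W'))) := by
  have hU : W⁻¹ * W' = 1 - W⁻¹ * (W - W') := by
    rw [Matrix.mul_sub, nonsing_inv_mul W hW, sub_sub_cancel]
  rw [trace_mul_transpose_mul_inv_mul_transpose, hU, trace_one_sub_mul_transpose_one_sub]

end Trace

theorem mahalanobis_unbiased_same_mean_general
    {Ω : Type*} [MeasurableSpace Ω] (μ : Measure Ω)
    {p : ℕ} (Y : Ω → (Fin p → ℝ)) (m : Fin p → ℝ)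
    (S0 Sj W0 Wj : Matrix (Fin p) (Fin p) ℝ)
    (hS0 : S0.PosDef)
    (hW0 : S0⁻¹ = W0 * W0ᵀ) (hWj : Sj⁻¹ = Wj * Wjᵀ)
    (hcov : ∀ l k, ∫ ω, (Y ω l - m l) * (Y ω k - m k) ∂μ = S0 l k)
    (hint : ∀ l k, Integrable (fun ω => (Y ω l - m l) * (Y ω k - m k)) μ)
    (V : Matrix (Fin p) (Fin p) ℝ) (hV : V = W0⁻¹ * (W0 - Wj))
    (htr : 2 * Matrix.trace V < Matrix.trace (Vᵀ * V)) :
    (∫ ω, (Y ω - m) ⬝ᵥ (S0⁻¹ *ᵥ (Y ω - m)) ∂μ <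
        ∫ ω, (Y ω - m) ⬝ᵥ (Sj⁻¹ *ᵥ (Y ω - m)) ∂μ) ∧
      ∫ ω, (Y ω - m) ⬝ᵥ (S0⁻¹ *ᵥ (Y ω - m)) ∂μ = (p : ℝ) := by
  have hS0det : IsUnit S0.det := isUnit_iff_ne_zero.2 hS0.det_pos.ne'
  have hS0symm : S0ᵀ = S0 := hS0.isHermitian
  have hquad (A : Matrix (Fin p) (Fin p) ℝ) :
      ∫ ω, (Y ω - m) ⬝ᵥ (A *ᵥ (Y ω - m)) ∂μ = trace (A * S0) := by
    rw [integral_dotProduct_mulVec_eq_trace (fun ω => Y ω - m) A S0 hint hcov, hS0symm]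
  have hW0det : IsUnit W0.det :=
    isUnit_det_of_right_inverse (B := W0ᵀ * S0) <| by
      rw [← Matrix.mul_assoc, ← hW0, nonsing_inv_mul S0 hS0det]
  have hS0eq : S0 = (W0 * W0ᵀ)⁻¹ := by rw [← hW0, nonsing_inv_nonsing_inv S0 hS0det]
  have htrue : ∫ ω, (Y ω - m) ⬝ᵥ (S0⁻¹ *ᵥ (Y ω - m)) ∂μ = p := by
    rw [hquad, nonsing_inv_mul S0 hS0det, trace_one, Fintype.card_fin]
  have hwrong : ∫ ω, (Y ω - m) ⬝ᵥ (Sj⁻¹ *ᵥ (Y ω - m)) ∂μ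
      = p - 2 * trace V + trace (Vᵀ * V) := by
    rw [hquad, hWj, hS0eq, trace_mul_transpose_mul_inv_mul_transpose_eq W0 Wj hW0det,
      Fintype.card_fin, hV]
  refine ⟨?_, htrue⟩
  rw [htrue, hwrong]
  linarith

/-- Unbiasedness of the Mahalanobis classifier with identical means: if
`2 tr(V) < tr(Vᵀ V)` where `V = W0⁻¹(W0 − Wj)`, then the expected squared Mahalanobis
distance using the wrong covariance `Sj` strictly exceeds the one using the true
covariance `S0`, which equals `p`. -/
theorem mahalanobis_unbiased_same_mean
    {Ω : Type*} [MeasurableSpace Ω] (μ : Measure Ω) [IsProbabilityMeasure μ]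
    {p : ℕ} (Y : Ω → (Fin p → ℝ)) (m : Fin p → ℝ)
    (S0 Sj W0 Wj : Matrix (Fin p) (Fin p) ℝ)
    (hS0 : S0.PosDef) (hSj : Sj.PosDef) (hne : Sj ≠ S0)
    (hW0 : S0⁻¹ = W0 * W0ᵀ) (hWj : Sj⁻¹ = Wj * Wjᵀ)
    (hW0lt : ∀ i j : Fin p, i < j → W0 i j = 0)
    (hWjlt : ∀ i j : Fin p, i < j → Wj i j = 0)
    (hmean : ∀ l, ∫ ω, Y ω l ∂μ = m l)
    (hcov : ∀ l k, ∫ ω, (Y ω l - m l) * (Y ω k - m k) ∂μ = S0 l k)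
    (hint : ∀ l k, Integrable (fun ω => (Y ω l - m l) * (Y ω k - m k)) μ)
    (V : Matrix (Fin p) (Fin p) ℝ) (hV : V = W0⁻¹ * (W0 - Wj))
    (htr : 2 * Matrix.trace V < Matrix.trace (Vᵀ * V)) :
    (∫ ω, (Y ω - m) ⬝ᵥ (S0⁻¹ *ᵥ (Y ω - m)) ∂μ <
        ∫ ω, (Y ω - m) ⬝ᵥ (Sj⁻¹ *ᵥ (Y ω - m)) ∂μ) ∧
      ∫ ω, (Y ω - m) ⬝ᵥ (S0⁻¹ *ᵥ (Y ω - m)) ∂μ = (p : ℝ) :=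
  mahalanobis_unbiased_same_mean_general μ Y m S0 Sj W0 Wj hS0 hW0 hWj hcov hint V hV htr
end
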